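/- arXiv:2012.07552 — 4 statements merged into one kernel-verified Lean document; each statement's English description precedes it below -/
import Mathlib

section
/- Let T > 0 (possibly T = ∞), let g : ℝ → ℝ be nonnegative, continuous on [−τ, T) and differentiable on [0, T) with g′(t) ≤ γ(t)·g(t) + α(t)·g(t−τ)^p + β(t) for all t ∈ [0, T), let ε > 0, and let h : ℝ → ℝ be continuous on [−τ, T), differentiable on [0, T), satisfy h′(t) = γ(t)·h(t) + α(t)·h(t−τ)^p + β(t) + ε for all t ∈ [0, T), and h(t) = g(t) for all t ∈ [−τ, 0]. Then g(t) < h(t) for all t ∈ (0, T). -/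
open Real MeasureTheory Set Filter
open Topology

/-- Strict comparison with the perturbed equation: if `g` satisfies the delay
differential inequality on `[0,T)` and `h` solves the equation with extra `+ ε`
and agrees with `g` on `[−τ,0]`, then `g < h` on `(0,T)`.  Here `T > 0` may be
infinite, so `T : EReal`. -/
theorem stmt_1
    (τ p : ℝ) (hτ : 0 < τ) (hp : 1 < p)
    (γ α β : ℝ → ℝ)
    (hγc : Continuous γ) (hαc : Continuous α) (hβc : Continuous β)
    (hα : ∀ t, 0 ≤ α t) (hβ : ∀ t, 0 ≤ β t)
    (T : EReal) (hT : 0 < T)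
    (g g' h h' : ℝ → ℝ)
    (hg0 : ∀ t : ℝ, -τ ≤ t → (t : EReal) < T → 0 ≤ g t)
    (hgc : ContinuousOn g {t : ℝ | -τ ≤ t ∧ (t : EReal) < T})
    (hgd : ∀ t : ℝ, 0 ≤ t → (t : EReal) < T →
      HasDerivWithinAt g (g' t) {s : ℝ | 0 ≤ s ∧ (s : EReal) < T} t)
    (hgineq : ∀ t : ℝ, 0 ≤ t → (t : EReal) < T →
      g' t ≤ γ t * g t + α t * g (t - τ) ^ p + β t)
    (ε : ℝ) (hε : 0 < ε)
    (hhc : ContinuousOn h {t : ℝ | -τ ≤ t ∧ (t : EReal) < T})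
    (hhd : ∀ t : ℝ, 0 ≤ t → (t : EReal) < T →
      HasDerivWithinAt h (h' t) {s : ℝ | 0 ≤ s ∧ (s : EReal) < T} t)
    (hheq : ∀ t : ℝ, 0 ≤ t → (t : EReal) < T →
      h' t = γ t * h t + α t * h (t - τ) ^ p + β t + ε)
    (hinit : ∀ t : ℝ, -τ ≤ t → t ≤ 0 → h t = g t) :
    ∀ t : ℝ, 0 < t → (t : EReal) < T → g t < h t := by
  intro t₁ ht₁ ht₁T
  by_contra hcon
  push_neg at hcon
  set s : Set ℝ := {s : ℝ | 0 ≤ s ∧ (s : EReal) < T} with hs_def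
  set φ : ℝ → ℝ := fun t => h t - g t with hφ_def
  -- membership in s for t ∈ [0, t₁]
  have hmem : ∀ t : ℝ, 0 ≤ t → t ≤ t₁ → t ∈ s := by
    intro t h0 h1
    exact ⟨h0, lt_of_le_of_lt (EReal.coe_le_coe_iff.2 h1) ht₁T⟩
  have hTlt : ∀ t : ℝ, t ≤ t₁ → (t : EReal) < T := fun t h1 =>
    lt_of_le_of_lt (EReal.coe_le_coe_iff.2 h1) ht₁T
  -- derivative of φ
  have hφd : ∀ t : ℝ, 0 ≤ t → (t : EReal) < T →
      HasDerivWithinAt φ (h' t - g' t) s t := fun t h0 h1 =>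
    (hhd t h0 h1).sub (hgd t h0 h1)
  -- the key derivative lower bound
  have key : ∀ t : ℝ, 0 ≤ t → (t : EReal) < T → h t = g t →
      g (t - τ) ≤ h (t - τ) → ε ≤ h' t - g' t := by
    intro t h0 h1 heq hle
    have h2 : (t - τ : EReal) < T :=
      lt_of_le_of_lt (EReal.coe_le_coe_iff.2 (sub_le_self t hτ.le)) h1
    have hg0' : 0 ≤ g (t - τ) := hg0 (t - τ) (by linarith) h2
    have hpow : g (t - τ) ^ p ≤ h (t - τ) ^ p :=
      Real.rpow_le_rpow hg0' hle (by linarith)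
    have hαpow : α t * g (t - τ) ^ p ≤ α t * h (t - τ) ^ p :=
      mul_le_mul_of_nonneg_left hpow (hα t)
    have e1 := hgineq t h0 h1
    have e2 := hheq t h0 h1
    rw [heq] at e2
    linarith
  -- φ 0 = 0
  have hφ0 : φ 0 = 0 := by
    simp [hφ_def, hinit 0 (by linarith) le_rfl]
  -- derivative of φ at 0 is ≥ ε
  have hD0 : ε ≤ h' 0 - g' 0 := by
    refine key 0 le_rfl (hTlt 0 ht₁.le) (hinit 0 (by linarith) le_rfl) ?_
    rw [hinit (0 - τ) (by linarith) (by linarith)]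
  -- φ is positive just to the right of 0
  have hslope0 : Tendsto (slope φ 0) (𝓝[s \ {0}] 0) (𝓝 (h' 0 - g' 0)) := by
    rw [← hasDerivWithinAt_iff_tendsto_slope]
    exact hφd 0 le_rfl (hTlt 0 ht₁.le)
  have hev : ∀ᶠ y in 𝓝[s \ {0}] 0, 0 < slope φ 0 y :=
    hslope0.eventually (eventually_gt_nhds (lt_of_lt_of_le hε hD0))
  rw [eventually_nhdsWithin_iff, Metric.eventually_nhds_iff] at hev
  obtain ⟨δ, hδ, hδpos⟩ := hev
  have hsmall : ∀ t : ℝ, 0 < t → t < δ → t ≤ t₁ → 0 < φ t := by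
    intro t h0 h1 h2
    have hd : dist t 0 < δ := by
      rw [Real.dist_eq, sub_zero, abs_of_pos h0]; exact h1
    have := hδpos hd ⟨hmem t h0.le h2, by simp [h0.ne']⟩
    rw [slope_def_field] at this
    simp only [hφ0, sub_zero] at this
    have : 0 < φ t / t := this
    have := mul_pos this h0
    rwa [div_mul_cancel₀ _ h0.ne'] at this
  -- define δ₀ and the set S of zeros
  set δ₀ : ℝ := min (δ / 2) t₁ with hδ₀_def
  have hδ₀pos : 0 < δ₀ := lt_min (by linarith) ht₁
  set S : Set ℝ := Icc δ₀ t₁ ∩ φ ⁻¹' (Iic 0) with hS_def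
  have hcontφ : ContinuousOn φ (Icc δ₀ t₁) := by
    apply (hhc.sub hgc).mono
    intro t ht
    exact ⟨by linarith [ht.1, hδ₀pos, hτ], hTlt t ht.2⟩
  have hSclosed : IsClosed S :=
    hcontφ.preimage_isClosed_of_isClosed isClosed_Icc isClosed_Iic
  have hSne : S.Nonempty := ⟨t₁, ⟨min_le_right _ _, le_rfl⟩, by
    simpa [hφ_def] using sub_nonpos.2 hcon⟩
  have hSbdd : BddBelow S := ⟨δ₀, fun x hx => hx.1.1⟩
  set t₀ : ℝ := sInf S with ht₀_def
  have ht₀S : t₀ ∈ S := hSclosed.csInf_mem hSne hSbdd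
  have ht₀pos : 0 < t₀ := lt_of_lt_of_le hδ₀pos ht₀S.1.1
  have ht₀le : t₀ ≤ t₁ := ht₀S.1.2
  -- φ is positive on (0, t₀)
  have hpos : ∀ t : ℝ, 0 < t → t < t₀ → 0 < φ t := by
    intro t h0 h1
    rcases lt_or_ge t δ₀ with hc | hc
    · exact hsmall t h0 (lt_of_lt_of_le hc (le_trans (min_le_left _ _) (by linarith))) (by linarith)
    · by_contra hnp
      push_neg at hnp
      have : t ∈ S := ⟨⟨hc, by linarith⟩, hnp⟩
      exact absurd (csInf_le hSbdd this) (not_le.2 h1)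
  -- φ t₀ = 0
  have hφt₀ : φ t₀ = 0 := by
    refine le_antisymm ht₀S.2 ?_
    have hcw : ContinuousWithinAt φ (Ioo 0 t₀) t₀ :=
      ((hhc.sub hgc) t₀ ⟨by linarith, hTlt t₀ ht₀le⟩).mono
        (fun x hx => ⟨by linarith [hx.1], hTlt x (by linarith [hx.2])⟩)
    have hne : (𝓝[Ioo (0:ℝ) t₀] t₀).NeBot := right_nhdsWithin_Ioo_neBot ht₀pos
    refine ge_of_tendsto hcw ?_
    filter_upwards [self_mem_nhdsWithin] with y hy
    exact (hpos y hy.1 hy.2).le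
  -- derivative bound at t₀
  have hD : ε ≤ h' t₀ - g' t₀ := by
    refine key t₀ ht₀pos.le (hTlt t₀ ht₀le) (by linarith [sub_eq_zero.1 hφt₀]) ?_
    rcases le_or_gt (t₀ - τ) 0 with hc | hc
    · exact le_of_eq (hinit (t₀ - τ) (by linarith) hc).symm
    · exact le_of_lt (sub_pos.1 (hpos (t₀ - τ) hc (by linarith)))
  -- but slopes on the left are ≤ 0
  have hslope : Tendsto (slope φ t₀) (𝓝[s \ {t₀}] t₀) (𝓝 (h' t₀ - g' t₀)) := by
    rw [← hasDerivWithinAt_iff_tendsto_slope]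
    exact hφd t₀ ht₀pos.le (hTlt t₀ ht₀le)
  have hsub : Ioo (0:ℝ) t₀ ⊆ s \ {t₀} := by
    intro y hy
    exact ⟨hmem y hy.1.le (by linarith [hy.2]), by simp [ne_of_lt hy.2]⟩
  have hne : (𝓝[Ioo (0:ℝ) t₀] t₀).NeBot := right_nhdsWithin_Ioo_neBot ht₀pos
  have hle0 : h' t₀ - g' t₀ ≤ 0 := by
    refine le_of_tendsto (hslope.mono_left (nhdsWithin_mono _ hsub)) ?_
    filter_upwards [self_mem_nhdsWithin] with y hy
    rw [slope_def_field, hφt₀, sub_zero]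
    exact div_nonpos_of_nonneg_of_nonpos (hpos y hy.1 hy.2).le (by linarith [hy.2])
  linarith
end

section
/- (Comparison lemma.) Let T > 0 (possibly T = ∞), let g : ℝ → ℝ be nonnegative, continuous on [−τ, T) and differentiable on [0, T) with g′(t) ≤ γ(t)·g(t) + α(t)·g(t−τ)^p + β(t) for all t ∈ [0, T), and let h : ℝ → ℝ be continuous on [−τ, T), differentiable on [0, T), satisfy h′(t) = γ(t)·h(t) + α(t)·h(t−τ)^p + β(t) for all t ∈ [0, T), and h(t) = g(t) for all t ∈ [−τ, 0]. Then g(t) ≤ h(t) for all t ∈ [0, T). -/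
open Real MeasureTheory Set Filter

/-! Method of steps. On `[0, t]` with `t ≤ (n + 1) τ`, the delayed arguments lie in `[-τ, n τ]`,
where `g ≤ h` is already known; as `α ≥ 0` and `x ↦ x ^ p` is monotone on `[0, ∞)`, the difference
`u = g - h` then satisfies the linear inequality `u' ≤ γ u` with `u 0 = 0`, and the integrating
factor `exp (-∫ γ)` makes `u · exp (-∫ γ)` antitone, hence nonpositive. -/

theorem nonpos_of_hasDerivAt_le_mul_self {γ u u' : ℝ → ℝ} {a b : ℝ} (hab : a ≤ b)
    (hγ : ContinuousOn γ (Icc a b)) (hu : ContinuousOn u (Icc a b))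
    (hu' : ∀ x ∈ Ioo a b, HasDerivAt u (u' x) x)
    (hle : ∀ x ∈ Ioo a b, u' x ≤ γ x * u x) (ha : u a ≤ 0) : u b ≤ 0 := by
  set Γ : ℝ → ℝ := fun x => ∫ s in a..x, γ s
  have hΓc : ContinuousOn Γ (Icc a b) := by
    simpa only [uIcc_of_le hab] using
      intervalIntegral.continuousOn_primitive_interval (hγ.integrableOn_Icc.mono_set (uIcc_of_le hab).le)
  have hΓ' : ∀ x ∈ Ioo a b, HasDerivAt Γ (γ x) x := fun x hx =>
    intervalIntegral.integral_hasDerivAt_right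
      ((hγ.mono (Icc_subset_Icc le_rfl hx.2.le)).intervalIntegrable_of_Icc hx.1.le)
      ((hγ.mono Ioo_subset_Icc_self).stronglyMeasurableAtFilter isOpen_Ioo x hx)
      ((hγ.mono Ioo_subset_Icc_self).continuousAt (isOpen_Ioo.mem_nhds hx))
  have hanti : AntitoneOn (fun x => u x * exp (-Γ x)) (Icc a b) := by
    refine antitoneOn_of_hasDerivWithinAt_nonpos (convex_Icc a b) (hu.mul hΓc.neg.rexp)
      (f' := fun x => (u' x - γ x * u x) * exp (-Γ x)) ?_ ?_ <;> rw [interior_Icc] <;> intro x hx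
    · have hexp : HasDerivAt (fun y => exp (-Γ y)) (exp (-Γ x) * -γ x) x :=
        (hΓ' x hx).neg.exp
      exact ((hu' x hx).mul hexp).hasDerivWithinAt.congr_deriv (by ring)
    · exact mul_nonpos_of_nonpos_of_nonneg (sub_nonpos.2 (hle x hx)) (exp_pos _).le
  have hb := (hanti (left_mem_Icc.2 hab) (right_mem_Icc.2 hab) hab).trans
    (mul_nonpos_of_nonpos_of_nonneg ha (exp_pos _).le)
  exact nonpos_of_mul_nonpos_left hb (exp_pos _)

theorem forall_nonneg_of_delayed_induction {τ : ℝ} (hτ : 0 < τ) {P : ℝ → Prop}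
    (step : ∀ t, 0 ≤ t → (∀ s, 0 ≤ s → s ≤ t - τ → P s) → P t) : ∀ t, 0 ≤ t → P t := by
  suffices h : ∀ n : ℕ, ∀ t, 0 ≤ t → t ≤ n * τ → P t by
    intro t ht
    obtain ⟨n, hn⟩ := exists_nat_ge (t / τ)
    exact h n t ht ((div_le_iff₀ hτ).1 hn)
  intro n
  induction n with
  | zero => exact fun t ht htn => step t ht fun s hs hst => by simp at htn; linarith
  | succ n ih =>
    refine fun t ht htn => step t ht fun s hs hst => ih s hs ?_
    push_cast at htn
    linarith

theorem stmt_2_general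
    (τ p : ℝ) (hτ : 0 < τ) (hp : 1 < p)
    (γ α β : ℝ → ℝ)
    (hγc : Continuous γ)
    (hα : ∀ t, 0 ≤ α t)
    (T : EReal)
    (g g' h h' : ℝ → ℝ)
    (hg0 : ∀ t : ℝ, -τ ≤ t → (t : EReal) < T → 0 ≤ g t)
    (hgc : ContinuousOn g {t : ℝ | -τ ≤ t ∧ (t : EReal) < T})
    (hgd : ∀ t : ℝ, 0 ≤ t → (t : EReal) < T →
      HasDerivWithinAt g (g' t) {s : ℝ | 0 ≤ s ∧ (s : EReal) < T} t)
    (hgineq : ∀ t : ℝ, 0 ≤ t → (t : EReal) < T →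
      g' t ≤ γ t * g t + α t * g (t - τ) ^ p + β t)
    (hhc : ContinuousOn h {t : ℝ | -τ ≤ t ∧ (t : EReal) < T})
    (hhd : ∀ t : ℝ, 0 ≤ t → (t : EReal) < T →
      HasDerivWithinAt h (h' t) {s : ℝ | 0 ≤ s ∧ (s : EReal) < T} t)
    (hheq : ∀ t : ℝ, 0 ≤ t → (t : EReal) < T →
      h' t = γ t * h t + α t * h (t - τ) ^ p + β t)
    (hinit : ∀ t : ℝ, -τ ≤ t → t ≤ 0 → h t = g t) :
    ∀ t : ℝ, 0 ≤ t → (t : EReal) < T → g t ≤ h t := by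
  refine forall_nonneg_of_delayed_induction hτ fun t ht ih htT => ?_
  have hlt : ∀ s ≤ t, (s : EReal) < T := fun s hs => (EReal.coe_le_coe_iff.2 hs).trans_lt htT
  have hnhds : ∀ x ∈ Ioo 0 t, {s : ℝ | 0 ≤ s ∧ (s : EReal) < T} ∈ nhds x := fun x hx =>
    mem_of_superset (Ioo_mem_nhds hx.1 hx.2) fun s hs => ⟨hs.1.le, hlt s hs.2.le⟩
  have hsub : Icc 0 t ⊆ {s : ℝ | -τ ≤ s ∧ (s : EReal) < T} := fun s hs =>
    ⟨by linarith [hs.1], hlt s hs.2⟩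
  have hdelay : ∀ x ∈ Ioo 0 t, g (x - τ) ≤ h (x - τ) := by
    intro x hx
    rcases le_or_gt (x - τ) 0 with hle | hpos
    · exact (hinit _ (by linarith [hx.1]) hle).ge
    · exact ih _ hpos.le (by linarith [hx.2]) (hlt _ (by linarith [hx.2]))
  have hlin : ∀ x ∈ Ioo 0 t, g' x - h' x ≤ γ x * (g x - h x) := by
    intro x hx
    have hpow := rpow_le_rpow (hg0 (x - τ) (by linarith [hx.1]) (hlt _ (by linarith [hx.2])))
      (hdelay x hx) (by linarith : 0 ≤ p)
    rw [mul_sub]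
    linarith [hgineq x hx.1.le (hlt x hx.2.le), hheq x hx.1.le (hlt x hx.2.le),
      mul_le_mul_of_nonneg_left hpow (hα x)]
  rw [← sub_nonpos]
  exact nonpos_of_hasDerivAt_le_mul_self (u := fun s => g s - h s) ht hγc.continuousOn
    ((hgc.mono hsub).sub (hhc.mono hsub))
    (fun x hx => ((hgd x hx.1.le (hlt x hx.2.le)).hasDerivAt (hnhds x hx)).sub
      ((hhd x hx.1.le (hlt x hx.2.le)).hasDerivAt (hnhds x hx)))
    hlin (by simp [hinit 0 (by linarith) le_rfl])

/-- Lemma 2.2 (comparison lemma): if `g` satisfies the delay differential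
inequality on `[0,T)` and `h` solves the corresponding delay differential
equation on `[0,T)` with `h = g` on `[−τ,0]`, then `g ≤ h` on `[0,T)`.
Here `T > 0` may be infinite, so `T : EReal`. -/
theorem stmt_2
    (τ p : ℝ) (hτ : 0 < τ) (hp : 1 < p)
    (γ α β : ℝ → ℝ)
    (hγc : Continuous γ) (hαc : Continuous α) (hβc : Continuous β)
    (hα : ∀ t, 0 ≤ α t) (hβ : ∀ t, 0 ≤ β t)
    (T : EReal) (hT : 0 < T)
    (g g' h h' : ℝ → ℝ)
    (hg0 : ∀ t : ℝ, -τ ≤ t → (t : EReal) < T → 0 ≤ g t)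
    (hgc : ContinuousOn g {t : ℝ | -τ ≤ t ∧ (t : EReal) < T})
    (hgd : ∀ t : ℝ, 0 ≤ t → (t : EReal) < T →
      HasDerivWithinAt g (g' t) {s : ℝ | 0 ≤ s ∧ (s : EReal) < T} t)
    (hgineq : ∀ t : ℝ, 0 ≤ t → (t : EReal) < T →
      g' t ≤ γ t * g t + α t * g (t - τ) ^ p + β t)
    (hhc : ContinuousOn h {t : ℝ | -τ ≤ t ∧ (t : EReal) < T})
    (hhd : ∀ t : ℝ, 0 ≤ t → (t : EReal) < T →
      HasDerivWithinAt h (h' t) {s : ℝ | 0 ≤ s ∧ (s : EReal) < T} t)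
    (hheq : ∀ t : ℝ, 0 ≤ t → (t : EReal) < T →
      h' t = γ t * h t + α t * h (t - τ) ^ p + β t)
    (hinit : ∀ t : ℝ, -τ ≤ t → t ≤ 0 → h t = g t) :
    ∀ t : ℝ, 0 ≤ t → (t : EReal) < T → g t ≤ h t :=
  stmt_2_general τ p hτ hp γ α β hγc hα T g g' h h' hg0 hgc hgd hgineq hhc hhd hheq hinit
end

section
/- Let h : ℝ → ℝ be nonnegative, continuous on [−τ, ∞), differentiable on [0, ∞), and satisfy h′(t) = γ(t)·h(t) + α(t)·h(t−τ)^p + β(t) for all t ≥ 0. Then for all t ≥ τ, h′(t) ≤ γ(t)·h(t) + α(t)·σ(t)^p·h(t)^p + β(t), where σ(t) := exp(−∫_{t−τ}^t γ(ξ) dξ). -/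
open Real MeasureTheory Set Filter

/-!
Dropping the nonnegative delay and forcing terms gives `h' ≥ γ h` on `[0, ∞)`, so the integrating
factor makes `h(u) exp(-∫₀ᵘ γ)` nondecreasing there. Comparing its values at `t - τ` and `t` gives
`h(t - τ) ≤ σ(t) h(t)`; raising this to the power `p` bounds the delay term `α(t) h(t - τ)^p`.
-/

lemma le_exp_neg_integral_mul_of_mul_le_deriv {a s t : ℝ} {γ f f' : ℝ → ℝ} (hγ : Continuous γ)
    (hf : ∀ u, a ≤ u → HasDerivWithinAt f (f' u) (Ici a) u)
    (hf' : ∀ u, a ≤ u → γ u * f u ≤ f' u) (has : a ≤ s) (hst : s ≤ t) :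
    f s ≤ exp (-∫ ξ in s..t, γ ξ) * f t := by
  set F : ℝ → ℝ := fun u => ∫ ξ in a..u, γ ξ
  have hF (u : ℝ) : HasDerivAt F (γ u) u := (hγ.integral_hasStrictDerivAt a u).hasDerivAt
  have hg (u : ℝ) (hu : a ≤ u) : HasDerivWithinAt (fun v => f v * exp (-F v))
      ((f' u - γ u * f u) * exp (-F u)) (Ici a) u := by
    refine ((hf u hu).mul (hF u).neg.exp.hasDerivWithinAt).congr_deriv ?_
    rw [Pi.neg_apply]; ring
  have hmono : MonotoneOn (fun v => f v * exp (-F v)) (Ici a) := by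
    refine monotoneOn_of_hasDerivWithinAt_nonneg (convex_Ici a)
      (f' := fun u => (f' u - γ u * f u) * exp (-F u))
      (fun u hu => (hg u hu).continuousWithinAt) (fun u hu => ?_) (fun u hu => ?_) <;>
      rw [interior_Ici] at hu
    · rw [interior_Ici]
      exact (hg u hu.le).mono Ioi_subset_Ici_self
    · exact mul_nonneg (sub_nonneg.2 (hf' u hu.le)) (exp_pos _).le
  have hFst : F t - F s = ∫ ξ in s..t, γ ξ :=
    intervalIntegral.integral_interval_sub_left (hγ.intervalIntegrable a t)
      (hγ.intervalIntegrable a s)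
  calc f s = f s * exp (-F s) * exp (F s) := by
        rw [mul_assoc, ← exp_add, neg_add_cancel, exp_zero, mul_one]
    _ ≤ f t * exp (-F t) * exp (F s) :=
        mul_le_mul_of_nonneg_right (hmono has (has.trans hst) hst) (exp_pos _).le
    _ = exp (-∫ ξ in s..t, γ ξ) * f t := by
        rw [← hFst, mul_assoc, ← exp_add, mul_comm]
        ring_nf

theorem stmt_5_general
    (τ p : ℝ) (hτ : 0 < τ) (hp : 1 < p)
    (γ α β : ℝ → ℝ)
    (hγc : Continuous γ)
    (hα : ∀ t, 0 ≤ α t) (hβ : ∀ t, 0 ≤ β t)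
    (h h' : ℝ → ℝ)
    (hh0 : ∀ t, -τ ≤ t → 0 ≤ h t)
    (hhd : ∀ t, 0 ≤ t → HasDerivWithinAt h (h' t) (Ici (0:ℝ)) t)
    (hheq : ∀ t, 0 ≤ t → h' t = γ t * h t + α t * h (t - τ) ^ p + β t) :
    ∀ t, τ ≤ t →
      h' t ≤ γ t * h t
        + α t * (Real.exp (-∫ ξ in (t - τ)..t, γ ξ)) ^ p * h t ^ p + β t := by
  intro t ht
  have hlin (u : ℝ) (hu : 0 ≤ u) : γ u * h u ≤ h' u := by
    have hdelay : 0 ≤ α u * h (u - τ) ^ p :=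
      mul_nonneg (hα u) (rpow_nonneg (hh0 _ (by linarith)) p)
    linarith [hheq u hu, hβ u]
  have hcompare : h (t - τ) ≤ exp (-∫ ξ in (t - τ)..t, γ ξ) * h t :=
    le_exp_neg_integral_mul_of_mul_le_deriv hγc hhd hlin (sub_nonneg.2 ht) (sub_le_self _ hτ.le)
  have hpow : h (t - τ) ^ p ≤ exp (-∫ ξ in (t - τ)..t, γ ξ) ^ p * h t ^ p := by
    rw [← mul_rpow (exp_pos _).le (hh0 t (by linarith))]
    exact rpow_le_rpow (hh0 _ (by linarith)) hcompare (by linarith)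
  rw [hheq t (by linarith)]
  linarith [mul_le_mul_of_nonneg_left hpow (hα t)]

/-- Inequality (12): a nonnegative solution of the delay equation satisfies the
delay-free differential inequality
`h'(t) ≤ γ(t) h(t) + α(t) σ(t)^p h(t)^p + β(t)` for `t ≥ τ`,
where `σ(t) = exp(−∫_{t−τ}^t γ)`. -/
theorem stmt_5
    (τ p : ℝ) (hτ : 0 < τ) (hp : 1 < p)
    (γ α β : ℝ → ℝ)
    (hγc : Continuous γ) (hαc : Continuous α) (hβc : Continuous β)
    (hα : ∀ t, 0 ≤ α t) (hβ : ∀ t, 0 ≤ β t)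
    (h h' : ℝ → ℝ)
    (hh0 : ∀ t, -τ ≤ t → 0 ≤ h t)
    (hhc : ContinuousOn h (Ici (-τ)))
    (hhd : ∀ t, 0 ≤ t → HasDerivWithinAt h (h' t) (Ici (0:ℝ)) t)
    (hheq : ∀ t, 0 ≤ t → h' t = γ t * h t + α t * h (t - τ) ^ p + β t) :
    ∀ t, τ ≤ t →
      h' t ≤ γ t * h t
        + α t * (Real.exp (-∫ ξ in (t - τ)..t, γ ξ)) ^ p * h t ^ p + β t :=
  stmt_5_general τ p hτ hp γ α β hγc hα hβ h h' hh0 hhd hheq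
end

section
/- Let w : [−τ, 0] → ℝ be continuous and nonnegative, and let h : ℝ → ℝ be nonnegative, continuous on [−τ, ∞), differentiable on [0, ∞), satisfy h′(t) = γ(t)·h(t) + α(t)·h(t−τ)^p + β(t) for all t ≥ 0 and h(t) = w(t) for t ∈ [−τ, 0]. Set h_τ := [w(0) + ∫_0^τ (α(ξ)·ν(ξ)·w(ξ−τ)^p + β(ξ)·ν(ξ)) dξ]/ν(τ). Suppose there is a constant ω > 0 such that (i) β(t)·ν(t)^p ≤ ω^p·α(t)·σ(t)^p for all t ≥ τ, and (ii) the improper integral I := ∫_τ^∞ α(ξ)·σ(ξ)^p·ν(ξ)^{1−p} dξ converges and (h_τ·ν(τ) + ω)^{1−p} > (p−1)·I. Then for all t ≥ τ, h(t) ≤ [ ( (h_τ·ν(τ) + ω)^{1−p} − (p−1)·∫_τ^t α(ξ)·σ(ξ)^p·ν(ξ)^{1−p} dξ )^{−1/(p−1)} − ω ] / ν(t). -/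
/-!
Multiplying by the integrating factor `ν`, the function `u = h ν` satisfies
`u' = ν (α h(t - τ) ^ p + β) ≥ 0`, so `u` is nondecreasing and `u τ = h_τ ν τ` by integrating
over `[0, τ]`. Since `σ t = ν t / ν (t - τ)`, monotonicity of `u`, condition (i) and
`a ^ p + b ^ p ≤ (a + b) ^ p` give `v' ≤ α σ ^ p ν ^ (1 - p) v ^ p` for `v = u + ω` on `[τ, ∞)`,
and Bihari's inequality bounds `v`; condition (ii) keeps the bound finite.
-/

open Real MeasureTheory Set Filter

/-- `ν(t) = exp(−∫₀ᵗ γ(ξ) dξ)`. -/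
noncomputable def nu (γ : ℝ → ℝ) (t : ℝ) : ℝ := Real.exp (-∫ ξ in (0:ℝ)..t, γ ξ)

/-- `σ(t) = exp(−∫_{t−τ}^t γ(ξ) dξ)`. -/
noncomputable def sig (γ : ℝ → ℝ) (τ t : ℝ) : ℝ :=
  Real.exp (-∫ ξ in (t - τ)..t, γ ξ)

section DerivWithinIci

variable {f f' : ℝ → ℝ} {a : ℝ}

lemma hasDerivAt_of_hasDerivWithinAt_Ici
    (hf : ∀ t, a ≤ t → HasDerivWithinAt f (f' t) (Ici a) t) {t : ℝ} (ht : a < t) :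
    HasDerivAt f (f' t) t :=
  (hf t ht.le).hasDerivAt (Ici_mem_nhds ht)

lemma monotoneOn_Ici_of_hasDerivWithinAt_nonneg
    (hf : ∀ t, a ≤ t → HasDerivWithinAt f (f' t) (Ici a) t) (hf' : ∀ t, a < t → 0 ≤ f' t) :
    MonotoneOn f (Ici a) := by
  refine monotoneOn_of_hasDerivWithinAt_nonneg (f' := f') (convex_Ici a)
    (fun t ht => (hf t ht).continuousWithinAt) (fun t ht => ?_) (fun t ht => ?_)
  · rw [interior_Ici] at ht
    exact (hasDerivAt_of_hasDerivWithinAt_Ici hf ht).hasDerivWithinAt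
  · rw [interior_Ici] at ht
    exact hf' t ht

lemma integral_eq_sub_of_hasDerivWithinAt_Ici_of_nonneg
    (hf : ∀ t, a ≤ t → HasDerivWithinAt f (f' t) (Ici a) t) (hf' : ∀ t, a < t → 0 ≤ f' t)
    {b : ℝ} (hab : a ≤ b) :
    ∫ t in a..b, f' t = f b - f a := by
  have hcont : ContinuousOn f (Icc a b) := fun t ht =>
    (hf t ht.1).continuousWithinAt.mono Icc_subset_Ici_self
  have hderiv : ∀ t ∈ Ioo a b, HasDerivAt f (f' t) t :=
    fun t ht => hasDerivAt_of_hasDerivWithinAt_Ici hf ht.1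
  refine intervalIntegral.integral_eq_sub_of_hasDerivAt_of_le hab hcont hderiv ?_
  exact (intervalIntegrable_iff_integrableOn_Ioc_of_le hab).2
    (intervalIntegral.integrableOn_deriv_of_nonneg hcont hderiv fun t ht => hf' t ht.1)

end DerivWithinIci

lemma intervalIntegral_le_setIntegral_Ici {f : ℝ → ℝ} {a b : ℝ} (hf : IntegrableOn f (Ici a))
    (hf0 : ∀ x, 0 ≤ f x) (hab : a ≤ b) : ∫ x in a..b, f x ≤ ∫ x in Ici a, f x := by
  rw [intervalIntegral.integral_of_le hab]
  exact setIntegral_mono_set hf (Eventually.of_forall hf0)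
    (Ioc_subset_Ioi_self.trans Ioi_subset_Ici_self).eventuallyLE

lemma le_rpow_neg_one_div_sub_one {x c p : ℝ} (hp : 1 < p) (hx : 0 < x) (hc : 0 < c)
    (hcx : c ≤ x ^ (1 - p)) : x ≤ c ^ (-(1 / (p - 1))) := by
  have hexp : (1 - p) * -(1 / (p - 1)) = 1 := by
    field_simp [(sub_pos.2 hp).ne']
    ring
  calc x = (x ^ (1 - p)) ^ (-(1 / (p - 1))) := by rw [← rpow_mul hx.le, hexp, rpow_one]
    _ ≤ c ^ (-(1 / (p - 1))) :=
      rpow_le_rpow_of_nonpos hc hcx (neg_nonpos.2 (one_div_pos.2 (sub_pos.2 hp)).le)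

/-- Bihari's inequality for `v' ≤ g v ^ p`: the quantity `v ^ (1 - p) + (p - 1) ∫ g` is
nondecreasing. -/
theorem rpow_one_sub_sub_integral_le {v v' g : ℝ → ℝ} {a p : ℝ} (hp : 1 < p)
    (hg : Continuous g) (hv : ∀ t, a ≤ t → 0 < v t)
    (hvd : ∀ t, a ≤ t → HasDerivWithinAt v (v' t) (Ici a) t)
    (hv' : ∀ t, a < t → v' t ≤ g t * v t ^ p) {t : ℝ} (ht : a ≤ t) :
    v a ^ (1 - p) - (p - 1) * ∫ ξ in a..t, g ξ ≤ v t ^ (1 - p) := by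
  set G : ℝ → ℝ := fun t => v t ^ (1 - p) + (p - 1) * ∫ ξ in a..t, g ξ
  have hGd : ∀ t, a ≤ t → HasDerivWithinAt G
      (v' t * (1 - p) * v t ^ (1 - p - 1) + (p - 1) * g t) (Ici a) t := fun t ht =>
    ((hvd t ht).rpow_const (Or.inl (hv t ht).ne')).add
      (((intervalIntegral.integral_hasDerivAt_right (hg.intervalIntegrable _ _)
        hg.stronglyMeasurable.stronglyMeasurableAtFilter hg.continuousAt).const_mul
          (p - 1)).hasDerivWithinAt)
  have hGd_nonneg : ∀ t, a < t → 0 ≤ v' t * (1 - p) * v t ^ (1 - p - 1) + (p - 1) * g t := by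
    intro t ht
    have hvt := hv t ht.le
    have : v' t * v t ^ (-p) ≤ g t :=
      calc v' t * v t ^ (-p) ≤ g t * v t ^ p * v t ^ (-p) :=
            mul_le_mul_of_nonneg_right (hv' t ht) (rpow_nonneg hvt.le _)
        _ = g t := by rw [mul_assoc, ← rpow_add hvt, add_neg_cancel, rpow_zero, mul_one]
    rw [show 1 - p - 1 = -p by ring]
    nlinarith
  have := monotoneOn_Ici_of_hasDerivWithinAt_nonneg hGd hGd_nonneg (mem_Ici.2 le_rfl) ht ht
  simp only [G, intervalIntegral.integral_same, mul_zero, add_zero] at this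
  linarith

lemma nu_pos (γ : ℝ → ℝ) (t : ℝ) : 0 < nu γ t := exp_pos _

lemma nu_zero (γ : ℝ → ℝ) : nu γ 0 = 1 := by simp [nu]

lemma hasDerivAt_nu {γ : ℝ → ℝ} (hγ : Continuous γ) (t : ℝ) :
    HasDerivAt (nu γ) (-γ t * nu γ t) t := by
  have := (intervalIntegral.integral_hasDerivAt_right (hγ.intervalIntegrable 0 t)
    hγ.stronglyMeasurable.stronglyMeasurableAtFilter hγ.continuousAt).neg.exp
  show HasDerivAt (fun s => exp (-∫ ξ in (0:ℝ)..s, γ ξ)) _ t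
  simpa [nu, mul_comm] using this

lemma continuous_nu {γ : ℝ → ℝ} (hγ : Continuous γ) : Continuous (nu γ) :=
  continuous_iff_continuousAt.2 fun t => (hasDerivAt_nu hγ t).continuousAt

lemma sig_eq_nu_div {γ : ℝ → ℝ} (hγ : Continuous γ) (τ t : ℝ) :
    sig γ τ t = nu γ t / nu γ (t - τ) := by
  rw [sig, nu, nu, ← exp_sub, neg_sub_neg, intervalIntegral.integral_interval_sub_left
    (hγ.intervalIntegrable 0 (t - τ)) (hγ.intervalIntegrable 0 t),
    intervalIntegral.integral_symm (t - τ) t]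

lemma continuous_sig {γ : ℝ → ℝ} (hγ : Continuous γ) (τ : ℝ) : Continuous (sig γ τ) := by
  simp only [funext (sig_eq_nu_div hγ τ)]
  exact (continuous_nu hγ).div ((continuous_nu hγ).comp (continuous_sub_right τ))
    fun t => (nu_pos γ _).ne'

lemma continuous_mul_sig_rpow_mul_nu_rpow {γ α : ℝ → ℝ} (hγ : Continuous γ) (hα : Continuous α)
    (τ p q : ℝ) : Continuous fun ξ => α ξ * sig γ τ ξ ^ p * nu γ ξ ^ q :=
  (hα.mul ((continuous_sig hγ τ).rpow_const fun _ => Or.inl (exp_pos _).ne')).mul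
    ((continuous_nu hγ).rpow_const fun _ => Or.inl (nu_pos γ _).ne')

lemma HasDerivWithinAt.mul_nu {γ h : ℝ → ℝ} (hγ : Continuous γ) {s : Set ℝ} {t f : ℝ}
    (hh : HasDerivWithinAt h (γ t * h t + f) s t) :
    HasDerivWithinAt (fun x => h x * nu γ x) (f * nu γ t) s t :=
  (hh.mul (hasDerivAt_nu hγ t).hasDerivWithinAt).congr_deriv (by ring)

section LinearPart

variable {γ h f : ℝ → ℝ}

lemma monotoneOn_mul_nu (hγ : Continuous γ)
    (hh : ∀ t, 0 ≤ t → HasDerivWithinAt h (γ t * h t + f t) (Ici 0) t)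
    (hf : ∀ t, 0 < t → 0 ≤ f t) : MonotoneOn (fun t => h t * nu γ t) (Ici 0) :=
  monotoneOn_Ici_of_hasDerivWithinAt_nonneg (fun t ht => (hh t ht).mul_nu hγ)
    fun t ht => mul_nonneg (hf t ht) (nu_pos γ t).le

lemma mul_nu_eq_add_integral (hγ : Continuous γ)
    (hh : ∀ t, 0 ≤ t → HasDerivWithinAt h (γ t * h t + f t) (Ici 0) t)
    (hf : ∀ t, 0 < t → 0 ≤ f t) {b : ℝ} (hb : 0 ≤ b) :
    h b * nu γ b = h 0 + ∫ ξ in (0:ℝ)..b, f ξ * nu γ ξ := by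
  rw [integral_eq_sub_of_hasDerivWithinAt_Ici_of_nonneg (fun t ht => (hh t ht).mul_nu hγ)
    (fun t ht => mul_nonneg (hf t ht) (nu_pos γ t).le) hb, nu_zero]
  ring

end LinearPart

/-- The pointwise estimate of the forcing term of `u = h ν`, with `x = h (t - τ)`, `y = h t`,
`μ = ν (t - τ)` and `ν = ν t`; the hypothesis `x μ ≤ y ν` is the monotonicity of `u`. -/
lemma mul_rpow_add_mul_le_mul_rpow_add {a b x y μ ν ω p : ℝ} (hp : 1 ≤ p) (ha : 0 ≤ a)
    (hx : 0 ≤ x) (hω : 0 ≤ ω) (hμ : 0 < μ) (hν : 0 < ν) (hxy : x * μ ≤ y * ν)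
    (hb : b * ν ^ p ≤ ω ^ p * (a * (ν / μ) ^ p)) :
    (a * x ^ p + b) * ν ≤ a * (ν / μ) ^ p * ν ^ (1 - p) * (y * ν + ω) ^ p := by
  set k := a * (ν / μ) ^ p * ν ^ (1 - p)
  have hν_pow : ν ^ p * ν ^ (1 - p) = ν := by rw [← rpow_add hν, add_sub_cancel, rpow_one]
  have hx_term : a * x ^ p * ν = k * (x * μ) ^ p := by
    have : μ ^ p ≠ 0 := (rpow_pos_of_pos hμ p).ne'
    simp only [k]
    rw [mul_rpow hx hμ.le, div_rpow hν.le hμ.le]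
    nth_rw 1 [← hν_pow]
    field_simp
  have hb_term : b * ν ≤ k * ω ^ p :=
    calc b * ν = b * ν ^ p * ν ^ (1 - p) := by rw [mul_assoc, hν_pow]
      _ ≤ ω ^ p * (a * (ν / μ) ^ p) * ν ^ (1 - p) :=
        mul_le_mul_of_nonneg_right hb (rpow_nonneg hν.le _)
      _ = k * ω ^ p := by ring
  have hk : 0 ≤ k := by positivity
  have hxμ : 0 ≤ x * μ := mul_nonneg hx hμ.le
  calc (a * x ^ p + b) * ν = a * x ^ p * ν + b * ν := by ring
    _ ≤ k * ((x * μ) ^ p + ω ^ p) := by rw [hx_term, mul_add]; gcongr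
    _ ≤ k * (x * μ + ω) ^ p := by gcongr; exact add_rpow_le_rpow_add hxμ hω hp
    _ ≤ k * (y * ν + ω) ^ p := by gcongr

theorem stmt_6_general
    (τ p : ℝ) (hτ : 0 < τ) (hp : 1 < p)
    (γ α β : ℝ → ℝ)
    (hγc : Continuous γ) (hαc : Continuous α)
    (hα : ∀ t, 0 ≤ α t) (hβ : ∀ t, 0 ≤ β t)
    (w : ℝ → ℝ)
    (h h' : ℝ → ℝ)
    (hh0 : ∀ t, -τ ≤ t → 0 ≤ h t)
    (hhd : ∀ t, 0 ≤ t → HasDerivWithinAt h (h' t) (Ici (0:ℝ)) t)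
    (hheq : ∀ t, 0 ≤ t → h' t = γ t * h t + α t * h (t - τ) ^ p + β t)
    (hinit : ∀ t, -τ ≤ t → t ≤ 0 → h t = w t)
    (hτv : ℝ)
    (hτvdef : hτv = (w 0 + ∫ ξ in (0:ℝ)..τ,
        (α ξ * nu γ ξ * w (ξ - τ) ^ p + β ξ * nu γ ξ)) / nu γ τ)
    (ω : ℝ) (hω : 0 < ω)
    (hcond1 : ∀ t, τ ≤ t → β t * nu γ t ^ p ≤ ω ^ p * (α t * sig γ τ t ^ p))
    (hint : IntegrableOn (fun ξ => α ξ * sig γ τ ξ ^ p * nu γ ξ ^ (1 - p)) (Ici τ))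
    (hcond2 : (p - 1) * ∫ ξ in Ici τ, α ξ * sig γ τ ξ ^ p * nu γ ξ ^ (1 - p)
        < (hτv * nu γ τ + ω) ^ (1 - p)) :
    ∀ t, τ ≤ t →
      h t ≤ (((hτv * nu γ τ + ω) ^ (1 - p)
          - (p - 1) * ∫ ξ in τ..t, α ξ * sig γ τ ξ ^ p * nu γ ξ ^ (1 - p))
            ^ (-(1 / (p - 1))) - ω) / nu γ t := by
  intro t ht
  set g : ℝ → ℝ := fun ξ => α ξ * sig γ τ ξ ^ p * nu γ ξ ^ (1 - p)
  have hf_nonneg : ∀ t, 0 < t → 0 ≤ α t * h (t - τ) ^ p + β t := fun t ht =>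
    add_nonneg (mul_nonneg (hα t) (rpow_nonneg (hh0 _ (by linarith)) _)) (hβ t)
  have hhd' : ∀ t, 0 ≤ t →
      HasDerivWithinAt h (γ t * h t + (α t * h (t - τ) ^ p + β t)) (Ici 0) t := fun t ht =>
    (hhd t ht).congr_deriv ((hheq t ht).trans (add_assoc _ _ _))
  have hu_mono := monotoneOn_mul_nu hγc hhd' hf_nonneg
  have hu_τ : h τ * nu γ τ = hτv * nu γ τ := by
    rw [mul_nu_eq_add_integral hγc hhd' hf_nonneg hτ.le, hτvdef,
      div_mul_cancel₀ _ (nu_pos γ τ).ne', hinit 0 (by linarith) le_rfl]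
    congr 1
    refine intervalIntegral.integral_congr fun ξ hξ => ?_
    rw [uIcc_of_le hτ.le] at hξ
    simp only [hinit (ξ - τ) (by linarith [hξ.1]) (by linarith [hξ.2])]
    ring
  have hv' : ∀ t, τ < t →
      (α t * h (t - τ) ^ p + β t) * nu γ t ≤ g t * (h t * nu γ t + ω) ^ p := fun t ht => by
    have hcond1' := hcond1 t ht.le
    rw [sig_eq_nu_div hγc] at hcond1'
    simpa only [g, sig_eq_nu_div hγc] using
      mul_rpow_add_mul_le_mul_rpow_add hp.le (hα t) (hh0 _ (by linarith)) hω.le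
        (nu_pos γ (t - τ)) (nu_pos γ t)
        (hu_mono (mem_Ici.2 (by linarith)) (mem_Ici.2 (by linarith)) (by linarith)) hcond1'
  have hbihari := rpow_one_sub_sub_integral_le (v := fun t => h t * nu γ t + ω) hp
    (continuous_mul_sig_rpow_mul_nu_rpow hγc hαc τ p (1 - p))
    (fun t ht => by nlinarith [hh0 t (by linarith), nu_pos γ t])
    (fun t ht => (((hhd' t (by linarith)).mul_nu hγc).mono (Ici_subset_Ici.2 hτ.le)).add_const ω)
    hv' ht
  have hint_le : ∫ ξ in τ..t, g ξ ≤ ∫ ξ in Ici τ, g ξ :=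
    intervalIntegral_le_setIntegral_Ici hint (fun ξ => mul_nonneg
      (mul_nonneg (hα ξ) (rpow_nonneg (exp_pos _).le _)) (rpow_nonneg (nu_pos γ ξ).le _)) ht
  have hbase_pos : 0 < (hτv * nu γ τ + ω) ^ (1 - p) - (p - 1) * ∫ ξ in τ..t, g ξ := by
    nlinarith [mul_le_mul_of_nonneg_left hint_le (sub_pos.2 hp).le]
  rw [le_div_iff₀ (nu_pos γ t), le_sub_iff_add_le]
  exact le_rpow_neg_one_div_sub_one hp (by nlinarith [hh0 t (by linarith), nu_pos γ t]) hbase_pos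
    (by simpa only [hu_τ] using hbihari)

/-- Lemma 2.3: global bound for the solution `h` of the delay equation under
conditions (15)–(16). -/
theorem stmt_6
    (τ p : ℝ) (hτ : 0 < τ) (hp : 1 < p)
    (γ α β : ℝ → ℝ)
    (hγc : Continuous γ) (hαc : Continuous α) (hβc : Continuous β)
    (hα : ∀ t, 0 ≤ α t) (hβ : ∀ t, 0 ≤ β t)
    (w : ℝ → ℝ) (hwc : ContinuousOn w (Icc (-τ) 0)) (hw0 : ∀ t ∈ Icc (-τ) 0, 0 ≤ w t)
    (h h' : ℝ → ℝ)
    (hh0 : ∀ t, -τ ≤ t → 0 ≤ h t)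
    (hhc : ContinuousOn h (Ici (-τ)))
    (hhd : ∀ t, 0 ≤ t → HasDerivWithinAt h (h' t) (Ici (0:ℝ)) t)
    (hheq : ∀ t, 0 ≤ t → h' t = γ t * h t + α t * h (t - τ) ^ p + β t)
    (hinit : ∀ t, -τ ≤ t → t ≤ 0 → h t = w t)
    (hτv : ℝ)
    (hτvdef : hτv = (w 0 + ∫ ξ in (0:ℝ)..τ,
        (α ξ * nu γ ξ * w (ξ - τ) ^ p + β ξ * nu γ ξ)) / nu γ τ)
    (ω : ℝ) (hω : 0 < ω)
    (hcond1 : ∀ t, τ ≤ t → β t * nu γ t ^ p ≤ ω ^ p * (α t * sig γ τ t ^ p))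
    (hint : IntegrableOn (fun ξ => α ξ * sig γ τ ξ ^ p * nu γ ξ ^ (1 - p)) (Ici τ))
    (hcond2 : (p - 1) * ∫ ξ in Ici τ, α ξ * sig γ τ ξ ^ p * nu γ ξ ^ (1 - p)
        < (hτv * nu γ τ + ω) ^ (1 - p)) :
    ∀ t, τ ≤ t →
      h t ≤ (((hτv * nu γ τ + ω) ^ (1 - p)
          - (p - 1) * ∫ ξ in τ..t, α ξ * sig γ τ ξ ^ p * nu γ ξ ^ (1 - p))
            ^ (-(1 / (p - 1))) - ω) / nu γ t :=
  stmt_6_general τ p hτ hp γ α β hγc hαc hα hβ w h h' hh0 hhd hheq hinit hτv hτvdef ω hω hcond1 hint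
    hcond2
end
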